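/- The regular language R = (aa)^+ is not a maximal language: for every odd k ≥ 3 and every non-conflictual tagged k-word set Φ over Σ = {a}, Red(Φ) ≠ (aa)^+. -/

import Mathlib

/-!
Common framework from the paper "Higher-order Operator Precedence Languages":
tagged words over an alphabet `α` (with a distinguished end-mark letter
`hash`), the tag set Δ = {[, ], ⊙}, tagged `k`-word factors, conflictual sets,
the strictly-locally-testable tagged language `Loc(Φ)`, handles, reductions
`⇝_Φ`, and the (tagged) maximal languages `RedBar Φ` / `Red Φ`.

Conventions: an end-word `⍟` is the alternating word `(#⊙)^m #` of (tagged)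
length `k-2`, so that it contributes `(k-1)/2` end-marks on each side,
matching all the examples of the paper.
-/

namespace HOP

/-- The three tags `[`, `]`, `⊙`. -/
inductive Tagg : Type where
  | lb : Tagg
  | rb : Tagg
  | dot : Tagg
deriving DecidableEq

/-- Symbols: either a terminal letter of `α` or a tag. -/
abbrev Sym (α : Type) := α ⊕ Tagg

/-- The projection `σ` erasing all tags. -/
def erase {α : Type} (w : List (Sym α)) : List α := w.filterMap Sum.getLeft?

/-- Tagged words: words in `Σ(ΔΣ)*`, i.e. alternating terminals and tags,
beginning and ending with a terminal. -/
inductive IsTagged {α : Type} : List (Sym α) → Prop where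
  | single (a : α) : IsTagged [Sum.inl a]
  | cons (a : α) (t : Tagg) {w : List (Sym α)} :
      IsTagged w → IsTagged (Sum.inl a :: Sum.inr t :: w)

/-- `φ_k(w)`: the set of tagged `k`-words occurring as factors of `w`. -/
def taggedFactors {α : Type} (k : ℕ) (w : List (Sym α)) : Set (List (Sym α)) :=
  {u | u.length = k ∧ IsTagged u ∧ u <:+: w}

/-- A set of tagged words is conflictual iff it contains two distinct words
with the same tag-erasure. -/
def Conflictual {α : Type} (S : Set (List (Sym α))) : Prop :=
  ∃ x ∈ S, ∃ y ∈ S, x ≠ y ∧ erase x = erase y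

def NonConflictual {α : Type} (S : Set (List (Sym α))) : Prop := ¬ Conflictual S

/-- `S` is a set of tagged `k`-words. -/
def TaggedKWords {α : Type} (k : ℕ) (S : Set (List (Sym α))) : Prop :=
  ∀ u ∈ S, IsTagged u ∧ u.length = k

/-- `hashWord hash n = # ⊙ # ⊙ … #` with `n+1` end-marks (tagged length `2n+1`). -/
def hashWord {α : Type} (hash : α) : ℕ → List (Sym α)
  | 0 => [Sum.inl hash]
  | n + 1 => Sum.inl hash :: Sum.inr Tagg.dot :: hashWord hash n

/-- The end-word `⍟ ∈ (#⊙)*#` used with width `k`: it has tagged length `k-2`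
(for odd `k ≥ 3`), i.e. `(k-1)/2` end-marks. -/
def endwFor {α : Type} (hash : α) (k : ℕ) : List (Sym α) := hashWord hash ((k - 3) / 2)

/-- `wrap hash k w = ⍟ [ w ] ⍟`. -/
def wrap {α : Type} (hash : α) (k : ℕ) (w : List (Sym α)) : List (Sym α) :=
  endwFor hash k ++ Sum.inr Tagg.lb :: (w ++ Sum.inr Tagg.rb :: endwFor hash k)

/-- `finalWord hash k = ⍟ ⊙ ⍟`, the target of a complete reduction. -/
def finalWord {α : Type} (hash : α) (k : ℕ) : List (Sym α) :=
  endwFor hash k ++ Sum.inr Tagg.dot :: endwFor hash k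

/-- The (full-word form of the) `k`-strictly-locally-testable tagged language:
all tagged `k`-word factors belong to `Φ`.  A tagged word `w` is in `Loc(Φ)`
in the sense of the paper iff `wrap hash k w ∈ LocFull k Φ`. -/
def LocFull {α : Type} (k : ℕ) (Φ : Set (List (Sym α))) : Set (List (Sym α)) :=
  {w | IsTagged w ∧ taggedFactors k w ⊆ Φ}

/-- `Loc(Φ)` as a set of tagged words `w` (tested on `⍟[w]⍟`). -/
def LocTagged {α : Type} (hash : α) (k : ℕ) (Φ : Set (List (Sym α))) :
    Set (List (Sym α)) :=
  {w | IsTagged w ∧ wrap hash k w ∈ LocFull k Φ}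

/-- The body `x` of a handle `[x]`: a tagged word over `Σ - {#}` whose tags are
all `⊙`. -/
def IsHandleBody {α : Type} (hash : α) (x : List (Sym α)) : Prop :=
  IsTagged x ∧ (∀ t : Tagg, Sum.inr t ∈ x → t = Tagg.dot) ∧ Sum.inl hash ∉ x

/-- One reduction step `w[x]z ⇝_Φ w s z`, allowed when `[x]` is a handle and
both source and target have all their tagged `k`-factors in `Φ`. -/
def RStep {α : Type} (hash : α) (k : ℕ) (Φ : Set (List (Sym α)))
    (u v : List (Sym α)) : Prop :=
  ∃ w x z, ∃ s : Tagg, IsHandleBody hash x ∧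
    u = w ++ Sum.inr Tagg.lb :: (x ++ Sum.inr Tagg.rb :: z) ∧
    v = w ++ Sum.inr s :: z ∧
    u ∈ LocFull k Φ ∧ v ∈ LocFull k Φ

/-- `⇝*_Φ`. -/
def Reduces {α : Type} (hash : α) (k : ℕ) (Φ : Set (List (Sym α))) :
    List (Sym α) → List (Sym α) → Prop :=
  Relation.ReflTransGen (RStep hash k Φ)

/-- The tagged maximal language `Red̄(Φ)`. -/
def RedBar {α : Type} (hash : α) (k : ℕ) (Φ : Set (List (Sym α))) :
    Set (List (Sym α)) :=
  {w | IsTagged w ∧ Reduces hash k Φ (wrap hash k w) (finalWord hash k)}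

/-- The maximal language `Red(Φ) = σ(Red̄(Φ))`. -/
def Red {α : Type} (hash : α) (k : ℕ) (Φ : Set (List (Sym α))) : Set (List α) :=
  erase '' RedBar hash k Φ

/-- Length-`j` factors of a plain word. -/
def plainFactors {α : Type} (j : ℕ) (w : List α) : Set (List α) :=
  {u | u.length = j ∧ u <:+: w}

/-- The `j`-strictly-locally-testable (plain) language `Loc(F)`, with
end-words `#^(j-1)`; as usual the language is `ε`-free and over `Σ - {#}`. -/
def LocPlain {α : Type} (hash : α) (j : ℕ) (F : Set (List α)) : Set (List α) :=
  {x | x ≠ [] ∧ hash ∉ x ∧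
    plainFactors j
      (List.replicate (j - 1) hash ++ x ++ List.replicate (j - 1) hash) ⊆ F}

end HOP

namespace HOP

/-- The one-letter alphabet `{a}` together with the end-mark `#`. -/
inductive AH : Type where
  | a : AH
  | h : AH
deriving DecidableEq

end HOP

/-!
Let `w ∈ Red̄(Φ)` with `σ(w) = a^(k+3)`. Over a single letter, any two tagged `k`-factors of
`⍟[w]⍟` inside `w` have the same erasure, so non-conflictuality makes them equal and all tags of
`w` are one tag `t`. If `t = [`, the only handle of `⍟[w]⍟` is its last `[a]`, and the reduction
can only go on if it is replaced by `]`, giving `⍟[w']⍟` with one `a` fewer; `t = ]` is symmetric.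
If `t = ⊙`, the whole body is a handle, and deleting one `a⊙` creates no new `k`-factor, so the
shorter word reduces to `⍟⊙⍟` in one step. Either way `a^(k+2) ∈ Red(Φ)`, which has odd length.
-/

section ListLemmas

variable {γ : Type*}

theorem List.append_cons_inj_of_notMem_right {s₁ s₂ t₁ t₂ : List γ} {b : γ}
    (h₁ : b ∉ t₁) (h₂ : b ∉ t₂) (h : s₁ ++ b :: t₁ = s₂ ++ b :: t₂) : s₁ = s₂ ∧ t₁ = t₂ := by
  rcases List.append_eq_append_iff.1 h with ⟨c, rfl, hc⟩ | ⟨c, rfl, hc⟩ <;>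
    cases c <;> simp_all

theorem List.append_cons_inj_of_notMem_left {s₁ s₂ t₁ t₂ : List γ} {b : γ}
    (h₁ : b ∉ s₁) (h₂ : b ∉ s₂) (h : s₁ ++ b :: t₁ = s₂ ++ b :: t₂) : s₁ = s₂ ∧ t₁ = t₂ := by
  rcases List.append_eq_append_iff.1 h with ⟨c, rfl, hc⟩ | ⟨c, rfl, hc⟩ <;>
    cases c <;> simp_all

theorem List.IsInfix.infix_append_or_infix_append {A B C u : List γ}
    (h : u <:+: A ++ B ++ C) (hu : u.length ≤ B.length + 1) :
    u <:+: A ++ B ∨ u <:+: B ++ C := by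
  obtain ⟨s, t, hst⟩ := h
  have hlen := congrArg List.length hst
  simp only [List.length_append] at hlen
  by_cases hc : s.length + u.length ≤ A.length + B.length
  · left
    have hpre : s ++ u <+: A ++ B :=
      List.prefix_of_prefix_length_le ⟨t, hst⟩ (List.prefix_append _ _) (by simpa using hc)
    exact (List.suffix_append s u).isInfix.trans hpre.isInfix
  · right
    have hsuf : u ++ t <:+ B ++ C :=
      List.suffix_of_suffix_length_le ⟨s, by simpa using hst⟩ (List.suffix_append _ _)
        (by simp; omega)
    exact (List.prefix_append u t).isInfix.trans hsuf.isInfix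

theorem List.IsInfix.infix_append_insert {A B C p q u : List γ} (hpq : p ++ B = B ++ q)
    (h : u <:+: A ++ B ++ C) (hu : u.length ≤ B.length + 1) :
    u <:+: A ++ p ++ B ++ C := by
  rcases h.infix_append_or_infix_append hu with h | h
  · have he : A ++ p ++ B ++ C = A ++ B ++ (q ++ C) := by simp [List.append_assoc, hpq]
    exact he ▸ h.trans (List.prefix_append _ _).isInfix
  · have he : A ++ p ++ B ++ C = A ++ p ++ (B ++ C) := by simp
    exact he ▸ h.trans (List.suffix_append _ _).isInfix

theorem List.exists_eq_replicate_of_infix_eq {l : List γ} {K : ℕ} (hK : 0 < K)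
    (hl : K < l.length)
    (h : ∀ u v, u <:+: l → v <:+: l → u.length = K → v.length = K → u = v) :
    ∃ b, l = replicate l.length b := by
  have hstep : ∀ j (hj : j + 1 < l.length), l[j] = l[j + 1] := by
    intro j hj
    set i := min j (l.length - K - 1)
    have hwin := congrArg (·[j - i]?) <| h ((l.drop i).take K) ((l.drop (i + 1)).take K)
      ((List.take_prefix _ _).isInfix.trans (List.drop_suffix _ _).isInfix)
      ((List.take_prefix _ _).isInfix.trans (List.drop_suffix _ _).isInfix)
      (by simp; omega) (by simp; omega)
    simp only [List.getElem?_take, List.getElem?_drop, if_pos (show j - i < K by omega),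
      show i + (j - i) = j by omega, show i + 1 + (j - i) = j + 1 by omega,
      List.getElem?_eq_getElem hj, List.getElem?_eq_getElem (Nat.lt_of_succ_lt hj)] at hwin
    exact Option.some.inj hwin
  exact ⟨l[0], List.isChain_eq_iff_eq_replicate.1 (List.isChain_iff_getElem.2 hstep) _
    (by simp [List.head?_eq_getElem?])⟩

end ListLemmas

namespace HOP

section TaggedWords

variable {α : Type} {hash a c : α} {k : ℕ} {Φ : Set (List (Sym α))}

def ofTags (a : α) : List Tagg → List (Sym α)
  | [] => [Sum.inl a]
  | t :: ts => Sum.inl a :: Sum.inr t :: ofTags a ts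

@[simp] theorem ofTags_nil : ofTags a [] = [Sum.inl a] := rfl

@[simp] theorem ofTags_cons (t : Tagg) (ts : List Tagg) :
    ofTags a (t :: ts) = Sum.inl a :: Sum.inr t :: ofTags a ts := rfl

theorem ofTags_append_cons (l₁ : List Tagg) (t : Tagg) (l₂ : List Tagg) :
    ofTags a (l₁ ++ t :: l₂) = ofTags a l₁ ++ Sum.inr t :: ofTags a l₂ := by
  induction l₁ with
  | nil => rfl
  | cons s l₁ ih => simp [ih]

@[simp] theorem length_ofTags (ts : List Tagg) : (ofTags a ts).length = 2 * ts.length + 1 := by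
  induction ts with
  | nil => rfl
  | cons t ts ih => simp only [ofTags_cons, List.length_cons, ih]; ring

@[simp] theorem erase_ofTags (ts : List Tagg) :
    erase (ofTags a ts) = List.replicate (ts.length + 1) a := by
  induction ts with
  | nil => rfl
  | cons t ts ih => simpa [erase, List.filterMap_cons, List.replicate_succ] using ih

theorem filterMap_getRight?_ofTags (ts : List Tagg) :
    (ofTags a ts).filterMap Sum.getRight? = ts := by
  induction ts with
  | nil => rfl
  | cons t ts ih => simp [List.filterMap_cons, ih]

theorem ofTags_injective (a : α) : Function.Injective (ofTags a) := fun l₁ l₂ h => by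
  rw [← filterMap_getRight?_ofTags (a := a) l₁, h, filterMap_getRight?_ofTags]

@[simp] theorem mem_ofTags {z : Sym α} {ts : List Tagg} :
    z ∈ ofTags a ts ↔ z = Sum.inl a ∨ ∃ t ∈ ts, z = Sum.inr t := by
  induction ts with
  | nil => simp
  | cons t ts ih => simp [ih, or_left_comm]

theorem isTagged_ofTags (ts : List Tagg) : IsTagged (ofTags a ts) := by
  induction ts with
  | nil => exact .single a
  | cons t ts ih => exact .cons a t ih

theorem ofTags_prefix_ofTags_append (l₁ l₂ : List Tagg) : ofTags a l₁ <+: ofTags a (l₁ ++ l₂) := by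
  cases l₂ with
  | nil => simp
  | cons t l₂ => exact ofTags_append_cons l₁ t l₂ ▸ List.prefix_append _ _

theorem ofTags_suffix_ofTags_append (l₁ l₂ : List Tagg) : ofTags a l₂ <:+ ofTags a (l₁ ++ l₂) := by
  induction l₁ with
  | nil => exact List.suffix_refl _
  | cons t l₁ ih => exact ih.trans ((List.suffix_cons _ _).trans (List.suffix_cons _ _))

theorem ofTags_infix_ofTags {l₁ l₂ : List Tagg} (h : l₁ <:+: l₂) :
    ofTags a l₁ <:+: ofTags a l₂ := by
  obtain ⟨s, r, rfl⟩ := h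
  rw [List.append_assoc]
  exact (ofTags_prefix_ofTags_append l₁ r).isInfix.trans
    (ofTags_suffix_ofTags_append s (l₁ ++ r)).isInfix

theorem exists_eq_ofTags {w : List (Sym α)} (hw : IsTagged w) {m : ℕ}
    (he : erase w = List.replicate m a) : ∃ ts, ts.length + 1 = m ∧ w = ofTags a ts := by
  induction hw generalizing m with
  | single c =>
    cases m <;> simp_all [erase, List.replicate_succ]
  | cons c t hw ih =>
    cases m with
    | zero => simp [erase] at he
    | succ m =>
      simp only [erase, List.filterMap_cons, Sum.getLeft?_inl, Sum.getLeft?_inr,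
        List.replicate_succ, List.cons.injEq] at he
      obtain ⟨ts, hlen, rfl⟩ := ih he.2
      exact ⟨t :: ts, by simp [hlen], by simp [he.1]⟩

theorem IsTagged.append_cons {u v : List (Sym α)} (s : Tagg) (hu : IsTagged u)
    (hv : IsTagged v) : IsTagged (u ++ Sum.inr s :: v) := by
  induction hu with
  | single b => exact .cons b s hv
  | cons b t _ ih => exact .cons b t ih

theorem isTagged_hashWord (n : ℕ) : IsTagged (hashWord hash n) := by
  induction n with
  | zero => exact .single hash
  | succ n ih => exact .cons hash .dot ih

theorem IsTagged.wrap {w : List (Sym α)} (hw : IsTagged w) : IsTagged (wrap hash k w) :=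
  .append_cons _ (isTagged_hashWord _) (.append_cons _ hw (isTagged_hashWord _))

@[simp] theorem inl_mem_hashWord {n : ℕ} : Sum.inl c ∈ hashWord hash n ↔ c = hash := by
  induction n with
  | zero => simp [hashWord]
  | succ n ih => simp [hashWord, ih]

@[simp] theorem inr_mem_hashWord {t : Tagg} {n : ℕ} :
    Sum.inr t ∈ hashWord hash n ↔ n ≠ 0 ∧ t = .dot := by
  induction n with
  | zero => simp [hashWord]
  | succ n ih => simp [hashWord, ih]

theorem ne_finalWord_of_inl_mem {v : List (Sym α)} (hc : Sum.inl c ∈ v) (hch : c ≠ hash) :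
    v ≠ finalWord hash k := by
  rintro rfl
  simp [finalWord, endwFor, hch] at hc

theorem wrap_ofTags_ne_finalWord (ha : a ≠ hash) (ts : List Tagg) :
    wrap hash k (ofTags a ts) ≠ finalWord hash k :=
  ne_finalWord_of_inl_mem (by simp [wrap]) ha

theorem taggedFactors_mono {u v : List (Sym α)} (h : u <:+: v) :
    taggedFactors k u ⊆ taggedFactors k v :=
  fun _ ⟨hlen, htag, hu⟩ => ⟨hlen, htag, hu.trans h⟩

theorem infix_wrap (w : List (Sym α)) : w <:+: wrap hash k w :=
  ⟨endwFor hash k ++ [Sum.inr .lb], Sum.inr .rb :: endwFor hash k, by simp [wrap]⟩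

theorem IsHandleBody.inr_notMem {x : List (Sym α)} (hx : IsHandleBody hash x) {t : Tagg}
    (ht : t ≠ .dot) : Sum.inr t ∉ x :=
  fun hmem => ht (hx.2.1 t hmem)

theorem isHandleBody_ofTags_replicate_dot (ha : a ≠ hash) (n : ℕ) :
    IsHandleBody hash (ofTags a (List.replicate n .dot)) :=
  ⟨isTagged_ofTags _, by simp +contextual, by simp [ha.symm]⟩

end TaggedWords

section Reductions

variable {α : Type} {hash : α} {k : ℕ} {Φ : Set (List (Sym α))}

theorem Reduces.mem_locFull_left {u v : List (Sym α)} (h : Reduces hash k Φ u v)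
    (hne : u ≠ v) : u ∈ LocFull k Φ := by
  obtain ⟨_, ⟨_, _, _, _, _, _, _, hu, _⟩, _⟩ := h.cases_head.resolve_left hne
  exact hu

theorem Reduces.mem_locFull_right {u v : List (Sym α)} (h : Reduces hash k Φ u v)
    (hne : u ≠ v) : v ∈ LocFull k Φ := by
  obtain ⟨_, _, ⟨_, _, _, _, _, _, _, _, hv⟩⟩ := h.cases_tail.resolve_left (Ne.symm hne)
  exact hv

theorem Reduces.lb_mem_and_rb_mem {v : List (Sym α)} (h : Reduces hash k Φ v (finalWord hash k))
    (hne : v ≠ finalWord hash k) : Sum.inr .lb ∈ v ∧ Sum.inr .rb ∈ v := by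
  obtain ⟨_, ⟨_, _, _, _, _, rfl, _⟩, _⟩ := h.cases_head.resolve_left hne
  simp

theorem RStep.eq_of_rb_notMem {A B v : List (Sym α)} {c : α}
    (h : RStep hash k Φ (A ++ Sum.inr .lb :: Sum.inl c :: Sum.inr .rb :: B) v)
    (hA : Sum.inr .rb ∉ A) (hB : Sum.inr .rb ∉ B) : ∃ s, v = A ++ Sum.inr s :: B := by
  obtain ⟨W, x, Z, s, hx, hu, rfl, -⟩ := h
  have hu' : (A ++ [Sum.inr .lb, Sum.inl c]) ++ Sum.inr .rb :: B =
      (W ++ Sum.inr .lb :: x) ++ Sum.inr .rb :: Z := by simpa using hu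
  obtain ⟨hWx, -, rfl⟩ := (List.append_cons_inj_of_notMem (by simpa using hA) hB).1 hu'
  obtain ⟨rfl, -⟩ := List.append_cons_inj_of_notMem_right (by simp)
    (hx.inr_notMem (t := .lb) (by decide)) hWx
  exact ⟨s, rfl⟩

theorem RStep.eq_of_lb_notMem {A B v : List (Sym α)} {c : α}
    (h : RStep hash k Φ (A ++ Sum.inr .lb :: Sum.inl c :: Sum.inr .rb :: B) v)
    (hA : Sum.inr .lb ∉ A) (hB : Sum.inr .lb ∉ B) : ∃ s, v = A ++ Sum.inr s :: B := by
  obtain ⟨W, x, Z, s, hx, hu, rfl, -⟩ := h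
  obtain ⟨rfl, -, hxZ⟩ := (List.append_cons_inj_of_notMem hA (by simpa using hB)).1 hu
  obtain ⟨-, rfl⟩ := List.append_cons_inj_of_notMem_left (s₁ := [Sum.inl c]) (by simp)
    (hx.inr_notMem (t := .rb) (by decide)) hxZ
  exact ⟨s, rfl⟩

end Reductions

section OneLetter

variable {α : Type} {hash a : α} {k : ℕ} {Φ : Set (List (Sym α))}

theorem eq_replicate_of_taggedFactors_subset (hk : 3 ≤ k) (hodd : Odd k)
    (hnc : NonConflictual Φ) {ts : List Tagg} (hΦ : taggedFactors k (ofTags a ts) ⊆ Φ)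
    (hlen : k / 2 < ts.length) : ∃ t, ts = List.replicate ts.length t := by
  have hK := Nat.two_mul_div_two_add_one_of_odd hodd
  have hwin : ∀ l, l <:+: ts → l.length = k / 2 → ofTags a l ∈ Φ := fun l hl hl' =>
    hΦ ⟨by simp [hl', hK], isTagged_ofTags l, ofTags_infix_ofTags hl⟩
  refine List.exists_eq_replicate_of_infix_eq (by omega) hlen fun u v hu hv hu' hv' => ?_
  by_contra hne
  exact hnc ⟨_, hwin u hu hu', _, hwin v hv hv', (ofTags_injective a).ne hne, by simp [hu', hv']⟩

theorem Reduces.of_wrap_replicate_lb_succ (ha : a ≠ hash) {n : ℕ}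
    (h : Reduces hash k Φ (wrap hash k (ofTags a (List.replicate (n + 1) .lb)))
      (finalWord hash k)) :
    Reduces hash k Φ (wrap hash k (ofTags a (List.replicate n .lb))) (finalWord hash k) := by
  obtain ⟨v, hstep, hv : Reduces hash k Φ v _⟩ :=
    h.cases_head.resolve_left (wrap_ofTags_ne_finalWord ha _)
  set A := endwFor hash k ++ Sum.inr .lb :: ofTags a (List.replicate n .lb)
  have hu : wrap hash k (ofTags a (List.replicate (n + 1) .lb)) =
      A ++ Sum.inr .lb :: Sum.inl a :: Sum.inr .rb :: endwFor hash k := by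
    simp [A, wrap, List.replicate_succ', ofTags_append_cons]
  obtain ⟨s, rfl⟩ := (hu ▸ hstep).eq_of_rb_notMem (by simp [A, endwFor]) (by simp [endwFor])
  obtain rfl : s = .rb := by
    have := (hv.lb_mem_and_rb_mem (ne_finalWord_of_inl_mem (c := a) (by simp [A]) ha)).2
    simpa [A, endwFor, eq_comm] using this
  simpa [A, wrap] using hv

theorem Reduces.of_wrap_replicate_rb_succ (ha : a ≠ hash) {n : ℕ}
    (h : Reduces hash k Φ (wrap hash k (ofTags a (List.replicate (n + 1) .rb)))
      (finalWord hash k)) :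
    Reduces hash k Φ (wrap hash k (ofTags a (List.replicate n .rb))) (finalWord hash k) := by
  obtain ⟨v, hstep, hv : Reduces hash k Φ v _⟩ :=
    h.cases_head.resolve_left (wrap_ofTags_ne_finalWord ha _)
  set B := ofTags a (List.replicate n .rb) ++ Sum.inr .rb :: endwFor hash k
  have hu : wrap hash k (ofTags a (List.replicate (n + 1) .rb)) =
      endwFor hash k ++ Sum.inr .lb :: Sum.inl a :: Sum.inr .rb :: B := by
    simp [B, wrap, List.replicate_succ]
  obtain ⟨s, rfl⟩ := (hu ▸ hstep).eq_of_lb_notMem (by simp [endwFor]) (by simp [B, endwFor])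
  obtain rfl : s = .lb := by
    have := (hv.lb_mem_and_rb_mem (ne_finalWord_of_inl_mem (c := a) (by simp [B]) ha)).1
    simpa [B, endwFor, eq_comm] using this
  simpa [B, wrap] using hv

theorem Reduces.of_wrap_replicate_dot_succ (ha : a ≠ hash) {n : ℕ} (hn : k ≤ 2 * n + 2)
    (h : Reduces hash k Φ (wrap hash k (ofTags a (List.replicate (n + 1) .dot)))
      (finalWord hash k)) :
    Reduces hash k Φ (wrap hash k (ofTags a (List.replicate n .dot))) (finalWord hash k) := by
  have hne := wrap_ofTags_ne_finalWord (k := k) ha (List.replicate (n + 1) .dot)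
  set E := endwFor hash k
  set B := ofTags a (List.replicate n .dot)
  have hpq : [Sum.inl a, Sum.inr .dot] ++ B = B ++ [Sum.inr .dot, Sum.inl a] := by
    rw [← ofTags_nil (a := a), ← ofTags_append_cons, ← List.replicate_succ',
      List.replicate_succ]
    rfl
  have hshort : wrap hash k B = E ++ [Sum.inr .lb] ++ B ++ Sum.inr .rb :: E := by simp [wrap, E]
  have hlong : wrap hash k (ofTags a (List.replicate (n + 1) .dot)) =
      E ++ [Sum.inr .lb] ++ [Sum.inl a, Sum.inr .dot] ++ B ++ Sum.inr .rb :: E := by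
    simp [wrap, E, B, List.replicate_succ]
  have hloc : wrap hash k B ∈ LocFull k Φ := by
    refine ⟨(isTagged_ofTags _).wrap, fun u ⟨hlen, htag, hu⟩ => ?_⟩
    refine (h.mem_locFull_left hne).2 ⟨hlen, htag, hlong ▸ ?_⟩
    exact (hshort ▸ hu).infix_append_insert hpq (by simp [B, hlen]; omega)
  exact .single ⟨E, B, E, .dot, isHandleBody_ofTags_replicate_dot ha n, rfl, rfl, hloc,
    h.mem_locFull_right hne⟩

theorem Reduces.of_wrap_replicate_succ (ha : a ≠ hash) {n : ℕ} (hn : k ≤ 2 * n + 2) (t : Tagg)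
    (h : Reduces hash k Φ (wrap hash k (ofTags a (List.replicate (n + 1) t))) (finalWord hash k)) :
    Reduces hash k Φ (wrap hash k (ofTags a (List.replicate n t))) (finalWord hash k) := by
  cases t with
  | lb => exact h.of_wrap_replicate_lb_succ ha
  | rb => exact h.of_wrap_replicate_rb_succ ha
  | dot => exact h.of_wrap_replicate_dot_succ ha hn

end OneLetter

/-- From the proof of Theorem 2: the regular language `R = (aa)⁺` is not a
maximal language: for every odd `k ≥ 3` and every non-conflictual tagged
`k`-word set `Φ`, `Red(Φ) ≠ (aa)⁺`. -/
theorem aa_not_maxtag : ∀ k : ℕ, Odd k → 3 ≤ k →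
    ∀ Φ : Set (List (Sym AH)), TaggedKWords k Φ → NonConflictual Φ →
    Red AH.h k Φ ≠ {x | ∃ n : ℕ, 1 ≤ n ∧ x = List.replicate (2 * n) AH.a} := by
  rintro k ⟨j, rfl⟩ hk Φ - hnc heq
  have ha : AH.a ≠ AH.h := nofun
  obtain ⟨w, ⟨hw, hred⟩, hwe⟩ : List.replicate (2 * j + 4) AH.a ∈ Red AH.h (2 * j + 1) Φ :=
    heq ▸ ⟨j + 2, by omega, rfl⟩
  obtain ⟨ts, hts, rfl⟩ := exists_eq_ofTags hw hwe
  have hloc := hred.mem_locFull_left (wrap_ofTags_ne_finalWord ha ts)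
  obtain ⟨t, ht⟩ := eq_replicate_of_taggedFactors_subset hk ⟨j, rfl⟩ hnc
    ((taggedFactors_mono (infix_wrap _)).trans hloc.2) (by omega)
  rw [ht, show ts.length = (2 * j + 2) + 1 by omega] at hred
  have hodd : List.replicate (2 * j + 3) AH.a ∈ Red AH.h (2 * j + 1) Φ :=
    ⟨_, ⟨isTagged_ofTags _, hred.of_wrap_replicate_succ ha (by omega) t⟩, by simp⟩
  obtain ⟨n, -, hn⟩ := heq ▸ hodd
  have := congrArg List.length hn
  simp only [List.length_replicate] at this
  omega

end HOP
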